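/- Given a directed graph G = (V,F) with distinguished nodes s, t ∈ V and a distinct propositional variable p_v for each v ∈ V, let W = {p_s} and D = {(p_u : p_u / p_v) | (u,v) ∈ F} ∪ {(p_t : p_t / ⊥)}. Then t is reachable from s in G if and only if the default theory ⟨W,D⟩ has no stable extension. -/

import Mathlib

inductive Form : Type where
  | var : ℕ → Form
  | app : (n : ℕ) → ((Fin n → Bool) → Bool) → (Fin n → Form) → Form

namespace Form

def eval (σ : ℕ → Bool) : Form → Bool
  | var x => σ x
  | app _ f a => f (fun i => (a i).eval σ)

def tru : Form := app 0 (fun _ => true) (fun i => i.elim0)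
def fls : Form := app 0 (fun _ => false) (fun i => i.elim0)
def neg (φ : Form) : Form := app 1 (fun v => !(v 0)) (fun _ => φ)
def conj (φ ψ : Form) : Form := app 2 (fun v => v 0 && v 1) ![φ, ψ]
def disj (φ ψ : Form) : Form := app 2 (fun v => v 0 || v 1) ![φ, ψ]

end Form

/-- σ satisfies all formulae of A. -/
def Sat (σ : ℕ → Bool) (A : Set Form) : Prop := ∀ φ ∈ A, φ.eval σ = true

/-- Semantic consequence A ⊨ φ. -/
def Entails (A : Set Form) (φ : Form) : Prop := ∀ σ, Sat σ A → φ.eval σ = true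

/-- Th(A) = {φ | A ⊨ φ}. -/
def Th (A : Set Form) : Set Form := {φ | Entails A φ}

def Consistent (A : Set Form) : Prop := ∃ σ, Sat σ A

/-- A default rule (α : β / γ). -/
structure Default where
  pre : Form
  just : Form
  con : Form

/-- S contains W, is deductively closed, and closed under defaults applicable w.r.t. E. -/
def GammaClosed (W : Set Form) (D : Set Default) (E S : Set Form) : Prop :=
  W ⊆ S ∧ Th S = S ∧ ∀ d ∈ D, d.pre ∈ S → Form.neg d.just ∉ E → d.con ∈ S

/-- Γ(E): the smallest set satisfying the three closure conditions. -/
def Gamma (W : Set Form) (D : Set Default) (E : Set Form) : Set Form :=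
  ⋂₀ {S | GammaClosed W D E S}

/-- E is a stable extension of ⟨W,D⟩. -/
def Stable (W : Set Form) (D : Set Default) (E : Set Form) : Prop :=
  Gamma W D E = E

/-!
If `t` is reachable from `s`, the normal edge defaults push `p_t` into any consistent stable
extension, and then the blocking default `(p_t : p_t / ⊥)` fires; an inconsistent extension is
impossible because `W` is consistent. If `t` is unreachable, the consequences of
`{p_v | v reachable from s}` form a stable extension: the valuation true exactly on the reachable
variables shows that no other variable is derivable, so the blocking default never applies.
-/

open Form

lemma subset_Th (A : Set Form) : A ⊆ Th A := fun φ hφ _ hσ => hσ φ hφ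

lemma Th_mono {A B : Set Form} (h : A ⊆ B) : Th A ⊆ Th B :=
  fun _ hφ σ hσ => hφ σ fun ψ hψ => hσ ψ (h hψ)

lemma Th_Th (A : Set Form) : Th (Th A) = Th A :=
  Set.Subset.antisymm (fun _ hφ σ hσ => hφ σ fun _ hψ => hψ σ hσ) (subset_Th _)

lemma mem_Th_of_not_consistent {A : Set Form} (hA : ¬ Consistent A) (φ : Form) : φ ∈ Th A :=
  fun σ hσ => absurd ⟨σ, hσ⟩ hA

namespace Consistent

variable {A : Set Form}

lemma Th (hA : Consistent A) : Consistent (_root_.Th A) :=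
  let ⟨σ, hσ⟩ := hA; ⟨σ, fun _ hφ => hφ σ hσ⟩

lemma fls_not_mem (hA : Consistent A) : fls ∉ A := fun h =>
  let ⟨_, hσ⟩ := hA; Bool.false_ne_true (hσ _ h)

lemma neg_not_mem (hA : Consistent A) {φ : Form} (hφ : φ ∈ A) : neg φ ∉ A := fun h => by
  obtain ⟨σ, hσ⟩ := hA
  have hneg : (neg φ).eval σ = true := hσ _ h
  simp [neg, eval, hσ φ hφ] at hneg

end Consistent

section DefaultLogic

variable {W : Set Form} {D : Set Default} {E : Set Form}

lemma Gamma_subset {S : Set Form} (hS : GammaClosed W D E S) : Gamma W D E ⊆ S :=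
  Set.sInter_subset_of_mem hS

lemma gammaClosed_Gamma : GammaClosed W D E (Gamma W D E) := by
  refine ⟨fun φ hφ => Set.mem_sInter.2 fun S hS => hS.1 hφ, ?_, ?_⟩
  · refine Set.Subset.antisymm (fun φ hφ => Set.mem_sInter.2 fun S hS => ?_) (subset_Th _)
    rw [← hS.2.1]
    exact Th_mono (Gamma_subset hS) hφ
  · exact fun d hd hpre hjust => Set.mem_sInter.2 fun S hS =>
      hS.2.2 d hd (Set.mem_sInter.1 hpre S hS) hjust

namespace Stable

lemma gammaClosed (hE : Stable W D E) : GammaClosed W D E E := by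
  have h : GammaClosed W D E (Gamma W D E) := gammaClosed_Gamma
  rwa [hE] at h

/-- Were `E` inconsistent, every justification would be refuted in `E`, so `Th W` would be
closed under the (now vacuous) default rules and `E = Γ(E) ⊆ Th W`. -/
lemma consistent (hW : Consistent W) (hE : Stable W D E) : Consistent E := by
  by_contra hc
  have hall : ∀ φ, φ ∈ E := fun φ => hE.gammaClosed.2.1 ▸ mem_Th_of_not_consistent hc φ
  have hThW : GammaClosed W D E (Th W) :=
    ⟨subset_Th W, Th_Th W, fun _ _ _ hjust => absurd (hall _) hjust⟩
  exact hW.Th.fls_not_mem (Gamma_subset hThW (hE.symm ▸ hall fls))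

lemma con_mem_of_just_eq_pre (hE : Stable W D E) (hc : Consistent E) {d : Default}
    (hd : d ∈ D) (hnormal : d.just = d.pre) (hpre : d.pre ∈ E) : d.con ∈ E :=
  hE.gammaClosed.2.2 d hd hpre (hnormal ▸ hc.neg_not_mem hpre)

end Stable

end DefaultLogic

section Reachability

variable {V : Type} (F : Set (V × V)) (p : V → ℕ)

local notation:50 a " ⟶* " b => Relation.ReflTransGen (fun u v => (u, v) ∈ F) a b

def edgeDefaults : Set Default :=
  {d | ∃ e ∈ F, d = ⟨var (p e.1), var (p e.1), var (p e.2)⟩}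

def reachabilityDefaults (t : V) : Set Default :=
  edgeDefaults F p ∪ {⟨var (p t), var (p t), fls⟩}

def reachableVars (s : V) : Set Form :=
  (fun v => var (p v)) '' {v | s ⟶* v}

variable {F p} {s t : V}

lemma var_mem_of_reachable {D : Set Default} {E S : Set Form}
    (hS : GammaClosed {var (p s)} D E S) (hD : edgeDefaults F p ⊆ D)
    (hneg : ∀ u, (s ⟶* u) → var (p u) ∈ S → neg (var (p u)) ∉ E)
    {v : V} (hv : s ⟶* v) : var (p v) ∈ S := by
  induction hv with
  | refl => exact hS.1 rfl
  | tail hsu he ih => exact hS.2.2 _ (hD ⟨_, he, rfl⟩) ih (hneg _ hsu ih)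

lemma not_stable_of_reachable (hst : s ⟶* t) (E : Set Form) :
    ¬ Stable {var (p s)} (reachabilityDefaults F p t) E := fun hE => by
  have hc : Consistent E := hE.consistent ⟨fun _ => true, by rintro _ rfl; rfl⟩
  have hvar : var (p t) ∈ E := var_mem_of_reachable hE.gammaClosed Set.subset_union_left
    (fun _ _ hu => hc.neg_not_mem hu) hst
  exact hc.fls_not_mem (hE.con_mem_of_just_eq_pre hc (Or.inr rfl) rfl hvar)

lemma consistent_reachableVars : Consistent (reachableVars F p s) :=
  ⟨fun _ => true, by rintro _ ⟨v, _, rfl⟩; rfl⟩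

lemma reachable_of_var_mem_Th (hp : Function.Injective p) {u : V}
    (hu : var (p u) ∈ Th (reachableVars F p s)) : s ⟶* u := by
  classical
  let σ : ℕ → Bool := fun n => decide (n ∈ p '' {v | s ⟶* v})
  have hσ : Sat σ (reachableVars F p s) := by
    rintro _ ⟨v, hv, rfl⟩
    exact decide_eq_true ⟨v, hv, rfl⟩
  obtain ⟨v, hv, hvu⟩ := of_decide_eq_true (hu σ hσ)
  exact hp hvu ▸ hv

lemma stable_Th_reachableVars (hp : Function.Injective p) (ht : ¬ s ⟶* t) :
    Stable {var (p s)} (reachabilityDefaults F p t) (Th (reachableVars F p s)) := by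
  set R := reachableVars F p s
  have hclosed : GammaClosed {var (p s)} (reachabilityDefaults F p t) (Th R) (Th R) := by
    refine ⟨?_, Th_Th R, ?_⟩
    · rintro _ rfl
      exact subset_Th R ⟨s, .refl, rfl⟩
    · rintro _ (⟨e, he, rfl⟩ | rfl) hpre _
      · exact subset_Th R ⟨e.2, (reachable_of_var_mem_Th hp hpre).tail he, rfl⟩
      · exact absurd (reachable_of_var_mem_Th hp hpre) ht
  refine Set.Subset.antisymm (Gamma_subset hclosed) ?_
  have hRsub : R ⊆ Gamma {var (p s)} (reachabilityDefaults F p t) (Th R) := by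
    rintro _ ⟨v, hv, rfl⟩
    exact var_mem_of_reachable gammaClosed_Gamma Set.subset_union_left
      (fun u hu _ => consistent_reachableVars.Th.neg_not_mem (subset_Th R ⟨u, hu, rfl⟩)) hv
  exact gammaClosed_Gamma.2.1 ▸ Th_mono hRsub

end Reachability

theorem stmt12_general (V : Type) (F : Set (V × V)) (s t : V)
    (p : V → ℕ) (hp : Function.Injective p) :
    Relation.ReflTransGen (fun u v => (u, v) ∈ F) s t ↔
    ¬ ∃ E : Set Form,
        Stable {Form.var (p s)}
          ({d | ∃ e ∈ F, d = ⟨Form.var (p e.1), Form.var (p e.1), Form.var (p e.2)⟩} ∪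
            {⟨Form.var (p t), Form.var (p t), Form.fls⟩}) E := by
  refine ⟨fun hst ⟨E, hE⟩ => not_stable_of_reachable hst E hE, fun hno => ?_⟩
  by_contra ht
  exact hno ⟨_, stable_Th_reachableVars hp ht⟩

/-- t reachable from s iff ⟨{p_s}, D⟩ with blocking rule (p_t : p_t / ⊥) has no
stable extension. -/
theorem stmt12 (V : Type) (F : Set (V × V)) (hF : F.Finite) (s t : V)
    (p : V → ℕ) (hp : Function.Injective p) :
    Relation.ReflTransGen (fun u v => (u, v) ∈ F) s t ↔
    ¬ ∃ E : Set Form,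
        Stable {Form.var (p s)}
          ({d | ∃ e ∈ F, d = ⟨Form.var (p e.1), Form.var (p e.1), Form.var (p e.2)⟩} ∪
            {⟨Form.var (p t), Form.var (p t), Form.fls⟩}) E :=
  stmt12_general V F s t p hp
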